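/- arXiv:2106.06624 — 5 statements merged into one kernel-verified Lean document; each statement's English description precedes it below -/
import Mathlib

section
/- Top-k robustness is not monotone in k: there exists a function f : ℝ → ℝ^3 (three logits on a one-dimensional input), a point x, and ε > 0, such that f is top-1 ε-locally-robust at x but not top-2 ε-locally-robust at x. -/
/-!
Take a step function of the input whose class 0 always has the strictly largest logit, so the
top-1 set never changes, while the logits of classes 1 and 2 swap order at the input 0, so the
top-2 set differs between the inputs 0 and 1. The jump is forced: continuous logits could not
swap order without tying.
-/

/-- `Fk f k x` is the set of classes achieving the `k` highest logit values of
`f` at `x`. -/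
noncomputable def Fk {E : Type*} {m : ℕ} (f : E → Fin m → ℝ) (k : ℕ) (x : E) : Finset (Fin m) :=
  Finset.univ.filter fun j => (Finset.univ.filter fun i => f x j ≤ f x i).card ≤ k

open Finset

section Fk

variable {E : Type*} {m k : ℕ} {f : E → Fin m → ℝ} {x : E} {j : Fin m}

theorem mem_Fk : j ∈ Fk f k x ↔ #{i | f x j ≤ f x i} ≤ k := by
  simp [Fk]

theorem mem_Fk_of_subset {s : Finset (Fin m)} (hs : ∀ i, f x j ≤ f x i → i ∈ s)
    (hk : #s ≤ k) : j ∈ Fk f k x :=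
  mem_Fk.2 <| (card_le_card fun i hi => hs i (mem_filter.1 hi).2).trans hk

theorem notMem_Fk_of_isStrictMin (hk : k < m) (hj : ∀ i ≠ j, f x j < f x i) :
    j ∉ Fk f k x := by
  have all_ge : ({i | f x j ≤ f x i} : Finset (Fin m)) = univ :=
    filter_true_of_mem fun i _ => by
      rcases eq_or_ne i j with rfl | hij
      · exact le_rfl
      · exact (hj i hij).le
  rw [mem_Fk, all_ge, card_univ, Fintype.card_fin]
  omega

theorem Fk_one_of_isStrictMax (hj : ∀ i ≠ j, f x i < f x j) : Fk f 1 x = {j} := by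
  have le_logit_j : ∀ i, f x i ≤ f x j := fun i => by
    rcases eq_or_ne i j with rfl | hij
    exacts [le_rfl, (hj i hij).le]
  have eq_j_of_ge : ∀ i, f x j ≤ f x i → i = j := fun i hi => by
    by_contra hij
    exact (hj i hij).not_ge hi
  ext i
  rw [mem_singleton, mem_Fk, card_le_one]
  simp only [mem_filter, mem_univ, true_and]
  constructor
  · intro h
    exact h i le_rfl j (le_logit_j i)
  · rintro rfl a ha b hb
    rw [eq_j_of_ge a ha, eq_j_of_ge b hb]

end Fk

noncomputable def swapLogits (z : ℝ) : Fin 3 → ℝ :=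
  if z ≤ 0 then ![2, 0, 1] else ![2, 1, 0]

theorem swapLogits_injective (z : ℝ) : Function.Injective (swapLogits z) := by
  unfold swapLogits
  split_ifs <;> intro i j <;> fin_cases i <;> fin_cases j <;> norm_num

theorem Fk_one_swapLogits (z : ℝ) : Fk swapLogits 1 z = {0} := by
  refine Fk_one_of_isStrictMax fun i hi => ?_
  unfold swapLogits
  split_ifs <;> fin_cases i <;> simp_all

theorem one_notMem_Fk_two_swapLogits_zero : 1 ∉ Fk swapLogits 2 0 := by
  refine notMem_Fk_of_isStrictMin (by norm_num) fun i hi => ?_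
  simp only [swapLogits, le_refl, if_true]
  fin_cases i <;> simp_all

theorem one_mem_Fk_two_swapLogits_one : 1 ∈ Fk swapLogits 2 1 := by
  refine mem_Fk_of_subset (s := {0, 1}) (fun i hi => ?_) card_le_two
  simp only [swapLogits, if_neg (one_pos.not_ge : ¬(1 : ℝ) ≤ 0)] at hi
  fin_cases i <;> norm_num at hi <;> simp

/-- Top-k robustness is not monotone in `k`: there is a three-logit function on
a one-dimensional input (with pairwise distinct logits everywhere, so each
`Fᵏ` has exactly `k` elements), a point `x` and `ε > 0`, such that `f` is
top-1 `ε`-locally-robust at `x` but not top-2 `ε`-locally-robust at `x`. -/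
theorem topk_not_monotone :
    ∃ (f : ℝ → Fin 3 → ℝ) (x ε : ℝ), 0 < ε ∧
      (∀ z (i j : Fin 3), i ≠ j → f z i ≠ f z j) ∧
      (∀ x', ‖x - x'‖ ≤ ε → Fk f 1 x = Fk f 1 x') ∧
      ¬ (∀ x', ‖x - x'‖ ≤ ε → Fk f 2 x = Fk f 2 x') := by
  refine ⟨swapLogits, 0, 1, one_pos, fun z _ _ => (swapLogits_injective z).ne,
    fun x' _ => by rw [Fk_one_swapLogits, Fk_one_swapLogits], fun robust => ?_⟩
  have top_two_eq : Fk swapLogits 2 0 = Fk swapLogits 2 1 := robust 1 (by norm_num)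
  exact one_notMem_Fk_two_swapLogits_zero (top_two_eq ▸ one_mem_Fk_two_swapLogits_one)
end

section
/- Top-k invariance certificate: let f : ℝ^n → ℝ^m, fix x and k ≤ m, let S = F^k(x) be the set of the k classes with highest logit values at x (all logits assumed distinct at all points). Suppose for every j ∈ S and i ∉ S the function f_j - f_i is K_{ji}-Lipschitz and f_j(x) - f_i(x) > ε·K_{ji}. Then for all x' with ‖x - x'‖ ≤ ε, F^k(x') = F^k(x). -/
open Finset

private lemma Fk_card_aux {m k : ℕ} (g : Fin m → ℝ) (hg : Function.Injective g) (hk : k ≤ m) :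
    (univ.filter fun j : Fin m => (univ.filter fun i => g j ≤ g i).card ≤ k).card = k := by
  set r : Fin m → ℕ := fun j => (univ.filter fun i => g j ≤ g i).card with hr
  have hanti : ∀ j j' : Fin m, g j < g j' → r j' < r j := by
    intro j j' h
    apply Finset.card_lt_card
    constructor
    · intro i hi
      simp only [mem_filter, mem_univ, true_and] at hi ⊢
      linarith
    · intro hsub
      have hj : j ∈ univ.filter fun i => g j ≤ g i := by simp
      have := hsub hj
      simp only [mem_filter] at this
      linarith [this.2]
  have hinj : Function.Injective r := by
    intro j j' h
    by_contra hne
    rcases lt_trichotomy (g j) (g j') with hlt | heq | hlt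
    · exact absurd h (Nat.ne_of_gt (hanti _ _ hlt))
    · exact hne (hg heq)
    · exact absurd h.symm (Nat.ne_of_gt (hanti _ _ hlt))
  have hmem : ∀ j, r j ∈ Finset.Icc 1 m := by
    intro j
    simp only [Finset.mem_Icc]
    constructor
    · have hj : j ∈ univ.filter fun i => g j ≤ g i := by simp
      exact Finset.card_pos.mpr ⟨j, hj⟩
    · calc r j ≤ (univ : Finset (Fin m)).card := Finset.card_filter_le _ _
        _ = m := by simp
  have himg : univ.image r = Finset.Icc 1 m := by
    apply Finset.eq_of_subset_of_card_le
    · intro v hv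
      simp only [mem_image] at hv
      obtain ⟨j, _, rfl⟩ := hv
      exact hmem j
    · rw [Nat.card_Icc, Finset.card_image_of_injective _ hinj]
      simp
  have h1 : (univ.filter fun j : Fin m => r j ≤ k).card
      = ((univ.filter fun j : Fin m => r j ≤ k).image r).card :=
    (Finset.card_image_of_injective _ hinj).symm
  have h2 : (univ.filter fun j : Fin m => r j ≤ k).image r
      = (univ.image r).filter (fun v => v ≤ k) := by
    ext v
    simp only [mem_image, mem_filter, mem_univ, true_and]
    constructor
    · rintro ⟨j, hj, rfl⟩; exact ⟨⟨j, rfl⟩, hj⟩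
    · rintro ⟨⟨j, rfl⟩, hj⟩; exact ⟨j, hj, rfl⟩
  rw [h1, h2, himg]
  have h3 : (Finset.Icc 1 m).filter (fun v => v ≤ k) = Finset.Icc 1 k := by
    ext v
    simp only [mem_filter, Finset.mem_Icc]
    omega
  rw [h3, Nat.card_Icc]
  omega

/-- Top-k invariance certificate: with pairwise distinct logits everywhere, if
for every `j` in the top-`k` set `Fᵏ(x)` and every `i` outside it the
difference `f_j - f_i` is `K j i`-Lipschitz and `f_j(x) - f_i(x) > ε·K j i`,
then `Fᵏ(x') = Fᵏ(x)` for all `x'` with `‖x - x'‖ ≤ ε`. -/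
theorem topk_certificate {n m : ℕ} (f : EuclideanSpace ℝ (Fin n) → Fin m → ℝ)
    (x : EuclideanSpace ℝ (Fin n)) (k : ℕ) (ε : ℝ) (K : Fin m → Fin m → ℝ)
    (hdist : ∀ z (i j : Fin m), i ≠ j → f z i ≠ f z j)
    (hk : k ≤ m) (hε : 0 ≤ ε) (hK : ∀ j i, 0 ≤ K j i)
    (hLip : ∀ j ∈ Fk f k x, ∀ i ∉ Fk f k x,
      ∀ a b, |(f a j - f a i) - (f b j - f b i)| ≤ K j i * ‖a - b‖)
    (hmargin : ∀ j ∈ Fk f k x, ∀ i ∉ Fk f k x, f x j - f x i > ε * K j i) :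
    ∀ x', ‖x - x'‖ ≤ ε → Fk f k x' = Fk f k x := by
  intro x' hx'
  have hginj : ∀ z, Function.Injective (f z) := by
    intro z i j h
    by_contra hne
    exact hdist z i j hne h
  have hcard : ∀ z, (Fk f k z).card = k := fun z => Fk_card_aux (f z) (hginj z) hk
  -- key separation at x'
  have hsep : ∀ j ∈ Fk f k x, ∀ i ∉ Fk f k x, f x' i < f x' j := by
    intro j hj i hi
    have h1 := hLip j hj i hi x x'
    have h2 := hmargin j hj i hi
    have h3 : K j i * ‖x - x'‖ ≤ K j i * ε := mul_le_mul_of_nonneg_left hx' (hK j i)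
    have h4 := abs_le.mp (h1.trans h3)
    nlinarith [h4.1, h4.2]
  -- Fk f k x ⊆ Fk f k x'
  have hsub : Fk f k x ⊆ Fk f k x' := by
    intro j hj
    simp only [Fk, mem_filter, mem_univ, true_and]
    have hsubset : (univ.filter fun i => f x' j ≤ f x' i) ⊆ Fk f k x := by
      intro i hi
      simp only [mem_filter, mem_univ, true_and] at hi
      by_contra hiS
      exact absurd hi (not_le.mpr (hsep j hj i hiS))
    calc (univ.filter fun i => f x' j ≤ f x' i).card
        ≤ (Fk f k x).card := Finset.card_le_card hsubset
      _ = k := hcard x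
  exact (Finset.eq_of_subset_of_card_le hsub (le_of_eq ((hcard x').trans (hcard x).symm))).symm
end

section
/- RTK GloRo Net correctness (Theorem 1): let f : ℝ^n → ℝ^m with pairwise distinct logits everywhere, K_{ji} a Lipschitz constant of f_j - f_i for each pair, and define m^k_j(x) = f_j(x) - max_{i ∉ F^k(x)} (f_i(x) + ε K_{ji}), m^k(x) = min_{j ∈ F^k(x)} m^k_j(x), and m(x) = max_{k ≤ K} m^k(x). If m(x) > 0, then f is RT-K ε-locally-robust at x: there exists k ≤ K such that F^k(x') = F^k(x) for all x' with ‖x - x'‖ ≤ ε. -/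
/-!
If every class of `S = Fᵏ(x)` beats every class outside `S` by more than the worst-case
change `ε·K_{ji}` of their logit gap, then at any `x'` within `ε` all of `S` still lies
strictly above its complement. Distinct logits at `x` force `#S = k` (or `S` is everything),
so the ranks at `x'` are at most `#S ≤ k` inside `S` and at least `#S + 1 > k` outside it,
that is, `Fᵏ(x') = S`.
-/

open Finset

section TopK

variable {ι α : Type*} [Fintype ι] [LinearOrder α]

/-- 1-based, and tied coordinates share the larger rank: with ties, `topK g k` may have fewer
than `k` elements. -/
def rank (g : ι → α) (j : ι) : ℕ := #{i | g j ≤ g i}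

def topK (g : ι → α) (k : ℕ) : Finset ι := {j | rank g j ≤ k}

lemma mem_topK {g : ι → α} {k : ℕ} {j : ι} : j ∈ topK g k ↔ rank g j ≤ k := by
  simp [topK]

lemma card_topK_le (g : ι → α) (k : ℕ) : #(topK g k) ≤ k := by
  obtain hempty | hne := (topK g k).eq_empty_or_nonempty
  · simp [hempty]
  obtain ⟨j₀, hj₀, hmin⟩ := exists_min_image (topK g k) g hne
  calc #(topK g k) ≤ rank g j₀ := card_le_card fun i hi => by simpa using hmin i hi
    _ ≤ k := mem_topK.mp hj₀

lemma le_card_topK {g : ι → α} (hg : Function.Injective g) {k : ℕ} {i : ι}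
    (hi : i ∉ topK g k) : k ≤ #(topK g k) := by
  classical
  have hcompl : (topK g k)ᶜ.Nonempty := ⟨i, mem_compl.mpr hi⟩
  obtain ⟨i₀, hi₀, hmax⟩ := exists_max_image (topK g k)ᶜ g hcompl
  -- by injectivity, the only coordinate outside `topK` that is `≥ g i₀` is `i₀` itself
  have hsub : ({a | g i₀ ≤ g a} : Finset ι) ⊆ insert i₀ (topK g k) := by
    intro a ha
    rw [mem_filter] at ha
    by_cases haS : a ∈ topK g k
    · exact mem_insert_of_mem haS
    · exact mem_insert.mpr (Or.inl (hg (le_antisymm (hmax a (mem_compl.mpr haS)) ha.2)))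
  have hrank : k < rank g i₀ := not_le.mp (mt mem_topK.mpr (mem_compl.mp hi₀))
  have hcard := (card_le_card hsub).trans (card_insert_le _ _)
  unfold rank at hrank
  omega

lemma topK_eq_of_separates {g h : ι → α} (hg : Function.Injective g) {k : ℕ}
    (hsep : ∀ j ∈ topK g k, ∀ i ∉ topK g k, h i < h j) : topK h k = topK g k := by
  classical
  ext j
  rw [mem_topK]
  constructor
  · intro hj
    by_contra hjS
    have hsub : insert j (topK g k) ⊆ ({i | h j ≤ h i} : Finset ι) := by
      intro a ha
      rcases mem_insert.mp ha with rfl | haS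
      · simp
      · simpa using (hsep a haS j hjS).le
    have hcard := card_le_card hsub
    rw [card_insert_of_notMem hjS] at hcard
    have hk := le_card_topK hg hjS
    unfold rank at hj
    omega
  · intro hjS
    have hsub : ({i | h j ≤ h i} : Finset ι) ⊆ topK g k := by
      intro a ha
      by_contra haS
      exact (not_le.mpr (hsep j hjS a haS)) (mem_filter.mp ha).2
    exact (card_le_card hsub).trans (card_topK_le g k)

end TopK

lemma Fk_eq_topK {E : Type*} {m : ℕ} (f : E → Fin m → ℝ) (k : ℕ) (x : E) :
    Fk f k x = topK (f x) k :=
  rfl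

theorem rtk_gloro_correct_general {n m : ℕ} (f : EuclideanSpace ℝ (Fin n) → Fin m → ℝ)
    (x : EuclideanSpace ℝ (Fin n)) (K : ℕ) (ε : ℝ) (Kc : Fin m → Fin m → ℝ)
    (hdist : ∀ z (i j : Fin m), i ≠ j → f z i ≠ f z j)
    (hKc : ∀ j i, 0 ≤ Kc j i)
    (hLip : ∀ j i : Fin m,
      ∀ a b, |(f a j - f a i) - (f b j - f b i)| ≤ Kc j i * ‖a - b‖)
    (hpos : ∃ k, 1 ≤ k ∧ k ≤ K ∧
      ∀ j ∈ Fk f k x, ∀ i ∉ Fk f k x, 0 < f x j - (f x i + ε * Kc j i)) :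
    ∃ k, 1 ≤ k ∧ k ≤ K ∧ ∀ x', ‖x - x'‖ ≤ ε → Fk f k x = Fk f k x' := by
  obtain ⟨k, hk1, hkK, hmargin⟩ := hpos
  have hinj : Function.Injective (f x) := fun a b hab => not_imp_not.mp (hdist x a b) hab
  refine ⟨k, hk1, hkK, fun x' hx' => ?_⟩
  rw [Fk_eq_topK] at hmargin ⊢
  refine (topK_eq_of_separates hinj fun j hj i hi => ?_).symm
  have hdrift : (f x j - f x i) - (f x' j - f x' i) ≤ ε * Kc j i :=
    calc (f x j - f x i) - (f x' j - f x' i)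
        ≤ |(f x j - f x i) - (f x' j - f x' i)| := le_abs_self _
      _ ≤ Kc j i * ‖x - x'‖ := hLip j i x x'
      _ ≤ ε * Kc j i := by rw [mul_comm]; exact mul_le_mul_of_nonneg_right hx' (hKc j i)
  linarith [hmargin j hj i hi]

/-- RTK GloRo Net correctness (Theorem 1): with pairwise distinct logits
everywhere and `K j i` a Lipschitz constant of `f_j - f_i`, if the margin
`m(x) = max_{k ≤ K} min_{j ∈ Fᵏ(x)} (f_j(x) - max_{i ∉ Fᵏ(x)} (f_i(x) + ε·K j i))`
is positive — i.e., there is some `k` with `1 ≤ k ≤ K` such that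
`0 < f_j(x) - (f_i(x) + ε·K j i)` for all `j ∈ Fᵏ(x)` and `i ∉ Fᵏ(x)` — then
`f` is RT-K `ε`-locally-robust at `x`: there exists `k ≤ K` such that
`Fᵏ(x') = Fᵏ(x)` for all `x'` with `‖x - x'‖ ≤ ε`. -/
theorem rtk_gloro_correct {n m : ℕ} (f : EuclideanSpace ℝ (Fin n) → Fin m → ℝ)
    (x : EuclideanSpace ℝ (Fin n)) (K : ℕ) (ε : ℝ) (Kc : Fin m → Fin m → ℝ)
    (hdist : ∀ z (i j : Fin m), i ≠ j → f z i ≠ f z j)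
    (hK : 1 ≤ K) (hε : 0 ≤ ε) (hKc : ∀ j i, 0 ≤ Kc j i)
    (hLip : ∀ j i : Fin m,
      ∀ a b, |(f a j - f a i) - (f b j - f b i)| ≤ Kc j i * ‖a - b‖)
    (hpos : ∃ k, 1 ≤ k ∧ k ≤ K ∧
      ∀ j ∈ Fk f k x, ∀ i ∉ Fk f k x, 0 < f x j - (f x i + ε * Kc j i)) :
    ∃ k, 1 ≤ k ∧ k ≤ K ∧ ∀ x', ‖x - x'‖ ≤ ε → Fk f k x = Fk f k x' :=
  rtk_gloro_correct_general f x K ε Kc hdist hKc hLip hpos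
end

section
/- Affinity GloRo Net correctness: with f, F^k, m^k defined as for the RTK GloRo Net, let 𝒮 be a collection of affinity sets (subsets of labels) and define m(𝒮, x) = max over those k for which F^k(x) ⊆ S for some S ∈ 𝒮, of m^k(x). If m(𝒮, x) > 0, then f is affinity ε-locally-robust at x: there exist k and S ∈ 𝒮 with F^k(x) ⊆ S and F^k(x') = F^k(x) for all ‖x - x'‖ ≤ ε. -/
/-- Affinity GloRo Net correctness: with pairwise distinct logits everywhere
and `Kc j i` a Lipschitz constant of `f_j - f_i`, if the affinity margin
`m(𝒮, x)` is positive — i.e., there exist `k ≥ 1` and `S ∈ 𝒮` with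
`Fᵏ(x) ⊆ S` and `0 < f_j(x) - (f_i(x) + ε·Kc j i)` for all `j ∈ Fᵏ(x)`,
`i ∉ Fᵏ(x)` — then `f` is affinity `ε`-locally-robust at `x`: there exist `k`
and `S ∈ 𝒮` with `Fᵏ(x) ⊆ S` and `Fᵏ(x') = Fᵏ(x)` for all `‖x - x'‖ ≤ ε`. -/
theorem affinity_gloro_correct {n m : ℕ} (f : EuclideanSpace ℝ (Fin n) → Fin m → ℝ)
    (x : EuclideanSpace ℝ (Fin n)) (𝒮 : Finset (Finset (Fin m))) (ε : ℝ)
    (Kc : Fin m → Fin m → ℝ)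
    (hdist : ∀ z (i j : Fin m), i ≠ j → f z i ≠ f z j)
    (hε : 0 ≤ ε) (hKc : ∀ j i, 0 ≤ Kc j i)
    (hLip : ∀ j i : Fin m,
      ∀ a b, |(f a j - f a i) - (f b j - f b i)| ≤ Kc j i * ‖a - b‖)
    (hpos : ∃ k, 1 ≤ k ∧ (∃ S ∈ 𝒮, Fk f k x ⊆ S) ∧
      ∀ j ∈ Fk f k x, ∀ i ∉ Fk f k x, 0 < f x j - (f x i + ε * Kc j i)) :
    ∃ k, 1 ≤ k ∧ (∃ S ∈ 𝒮, Fk f k x ⊆ S) ∧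
      ∀ x', ‖x - x'‖ ≤ ε → Fk f k x = Fk f k x' := by
  obtain ⟨k, hk, hS, hmargin⟩ := hpos
  refine ⟨k, hk, hS, ?_⟩
  intro x' hx'
  set A := Fk f k x with hA
  have hmemx : ∀ j : Fin m, j ∈ A ↔
      (Finset.univ.filter fun i => f x j ≤ f x i).card ≤ k := by
    intro j; simp [hA, Fk]
  have hmemx' : ∀ j : Fin m, j ∈ Fk f k x' ↔
      (Finset.univ.filter fun i => f x' j ≤ f x' i).card ≤ k := by
    intro j; simp [Fk]
  -- separation at x'
  have hsep : ∀ j ∈ A, ∀ i ∉ A, f x' i < f x' j := by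
    intro j hj i hi
    have hm := hmargin j hj i hi
    have hl := hLip j i x x'
    have h1 : Kc j i * ‖x - x'‖ ≤ Kc j i * ε :=
      mul_le_mul_of_nonneg_left hx' (hKc j i)
    have h2 := abs_le.mp (le_trans hl h1)
    have hε2 : ε * Kc j i = Kc j i * ε := mul_comm _ _
    linarith [h2.1, h2.2]
  ext j
  constructor
  · intro hj
    rw [hmemx']
    obtain ⟨j0, hj0A, hj0min⟩ := A.exists_min_image (f x) ⟨j, hj⟩
    have hcardA : A.card ≤ k := by
      have hsub : A ⊆ Finset.univ.filter fun l => f x j0 ≤ f x l := by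
        intro l hl
        simp only [Finset.mem_filter, Finset.mem_univ, true_and]
        exact hj0min l hl
      exact le_trans (Finset.card_le_card hsub) ((hmemx j0).mp hj0A)
    have hsub : (Finset.univ.filter fun l => f x' j ≤ f x' l) ⊆ A := by
      intro l hl
      simp only [Finset.mem_filter, Finset.mem_univ, true_and] at hl
      by_contra hlA
      exact absurd hl (not_le.mpr (hsep j hj l hlA))
    exact le_trans (Finset.card_le_card hsub) hcardA
  · intro hj'
    by_contra hj
    -- first: A.card ≥ k, using a maximizer of f x outside A
    have hne : (Finset.univ.filter fun l => l ∉ A).Nonempty := ⟨j, by simp [hj]⟩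
    obtain ⟨i0, hi0mem, hi0max⟩ := Finset.exists_max_image _ (f x) hne
    have hi0 : i0 ∉ A := by
      simpa using hi0mem
    have hsub : (Finset.univ.filter fun l => f x i0 ≤ f x l) ⊆ insert i0 A := by
      intro l hl
      simp only [Finset.mem_filter, Finset.mem_univ, true_and] at hl
      by_contra hlmem
      simp only [Finset.mem_insert, not_or] at hlmem
      have hle : f x l ≤ f x i0 := hi0max l (by simp [hlmem.2])
      exact hdist x l i0 hlmem.1 (le_antisymm hle hl)
    have hr : k < (Finset.univ.filter fun l => f x i0 ≤ f x l).card :=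
      not_le.mp (fun h => hi0 ((hmemx i0).mpr h))
    have hcard : k ≤ A.card := by
      have h1 := le_trans (Nat.succ_le_of_lt hr) (Finset.card_le_card hsub)
      have h2 := Finset.card_insert_le i0 A
      omega
    -- now: rank of j at x' exceeds k
    have hsub2 : insert j A ⊆ Finset.univ.filter fun l => f x' j ≤ f x' l := by
      intro l hl
      simp only [Finset.mem_insert] at hl
      simp only [Finset.mem_filter, Finset.mem_univ, true_and]
      rcases hl with rfl | hl
      · exact le_refl _
      · exact le_of_lt (hsep l hl j hj)
    have h3 := Finset.card_le_card hsub2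
    rw [Finset.card_insert_of_notMem hj] at h3
    have h4 := (hmemx' j).mp hj'
    omega
end

section
/- Margin positivity implies top-k robustness: with m^k_j(x) = f_j(x) - max_{i ∉ F^k(x)}(f_i(x) + ε K_{ji}) and m^k(x) = min_{j ∈ F^k(x)} m^k_j(x), if m^k(x) > 0 then f is top-k ε-locally-robust at x, i.e., F^k(x') = F^k(x) for all x' with ‖x - x'‖ ≤ ε. -/
lemma card_Fk {E : Type*} {m : ℕ} (f : E → Fin m → ℝ) (k : ℕ) (x : E)
    (hdist : ∀ (i j : Fin m), i ≠ j → f x i ≠ f x j) (hkm : k ≤ m) :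
    (Fk f k x).card = k := by
  classical
  set r : Fin m → ℕ := fun j => (Finset.univ.filter fun i => f x j ≤ f x i).card with hr
  have hinj : Function.Injective r := by
    intro a b hab
    by_contra hne
    have key : ∀ a b : Fin m, f x b < f x a → r a < r b := by
      intro a b h
      apply Finset.card_lt_card
      constructor
      · intro i hi
        simp only [Finset.mem_filter, Finset.mem_univ, true_and] at hi ⊢
        linarith
      · intro hsub
        have := hsub (Finset.mem_filter.mpr ⟨Finset.mem_univ b, le_refl _⟩)
        simp only [Finset.mem_filter, Finset.mem_univ, true_and] at this
        linarith
    rcases lt_trichotomy (f x a) (f x b) with h | h | h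
    · have := key b a h; omega
    · exact hdist a b hne h
    · have := key a b h; omega
  have hmem : ∀ j : Fin m, r j ∈ Finset.Icc 1 m := by
    intro j
    simp only [Finset.mem_Icc]
    constructor
    · have : j ∈ Finset.univ.filter fun i => f x j ≤ f x i :=
        Finset.mem_filter.mpr ⟨Finset.mem_univ j, le_refl _⟩
      exact Finset.card_pos.mpr ⟨j, this⟩
    · simpa using Finset.card_filter_le Finset.univ fun i => f x j ≤ f x i
  have himg : Finset.univ.image r = Finset.Icc 1 m := by
    apply Finset.eq_of_subset_of_card_le
    · intro v hv
      rcases Finset.mem_image.mp hv with ⟨j, _, rfl⟩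
      exact hmem j
    · rw [Finset.card_image_of_injective _ hinj]
      simp
  have : Fk f k x = Finset.univ.filter fun j => ((· ≤ k) ∘ r) j := rfl
  rw [this, ← Finset.card_image_of_injective _ hinj]
  simp only [Function.comp]
  have hfi : ((Finset.univ.image r).filter (· ≤ k)) =
      ((Finset.univ.filter fun j => r j ≤ k).image r) := Finset.filter_image
  rw [← hfi, himg]
  have : (Finset.Icc 1 m).filter (· ≤ k) = Finset.Icc 1 k := by
    ext v; simp only [Finset.mem_filter, Finset.mem_Icc]; omega
  rw [this]; simp

/-- Margin positivity implies top-k robustness: with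
`mᵏ_j(x) = f_j(x) - max_{i ∉ Fᵏ(x)} (f_i(x) + ε·K j i)` and
`mᵏ(x) = min_{j ∈ Fᵏ(x)} mᵏ_j(x)`, the condition `mᵏ(x) > 0` — i.e.,
`0 < f_j(x) - (f_i(x) + ε·K j i)` for all `j ∈ Fᵏ(x)` and `i ∉ Fᵏ(x)` —
implies `Fᵏ(x') = Fᵏ(x)` for all `x'` with `‖x - x'‖ ≤ ε`. -/
theorem margin_pos_implies_topk {n m : ℕ}
    (f : EuclideanSpace ℝ (Fin n) → Fin m → ℝ)
    (x : EuclideanSpace ℝ (Fin n)) (k : ℕ) (ε : ℝ) (K : Fin m → Fin m → ℝ)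
    (hdist : ∀ z (i j : Fin m), i ≠ j → f z i ≠ f z j)
    (hk1 : 1 ≤ k) (hkm : k < m) (hε : 0 ≤ ε) (hK : ∀ j i, 0 ≤ K j i)
    (hLip : ∀ j i : Fin m,
      ∀ a b, |(f a j - f a i) - (f b j - f b i)| ≤ K j i * ‖a - b‖)
    (hpos : ∀ j ∈ Fk f k x, ∀ i ∉ Fk f k x, 0 < f x j - (f x i + ε * K j i)) :
    ∀ x', ‖x - x'‖ ≤ ε → Fk f k x' = Fk f k x := by
  intro x' hx'
  classical
  set S := Fk f k x with hS
  have hcard : S.card = k := card_Fk f k x (hdist x) hkm.le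
  have hsep : ∀ j ∈ S, ∀ i ∉ S, f x' i < f x' j := by
    intro j hj i hi
    have h1 := hpos j hj i hi
    have h2 := hLip j i x x'
    have h3 : K j i * ‖x - x'‖ ≤ K j i * ε := mul_le_mul_of_nonneg_left hx' (hK j i)
    have h4 : (f x j - f x i) - (f x' j - f x' i) ≤ K j i * ε :=
      le_trans (le_trans (le_abs_self _) h2) h3
    linarith
  ext j
  simp only [hS, Fk, Finset.mem_filter, Finset.mem_univ, true_and]
  constructor
  · intro hj'
    by_contra hj
    have hjS : j ∉ S := by simpa [hS, Fk] using hj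
    have hsub : insert j S ⊆ Finset.univ.filter fun i => f x' j ≤ f x' i := by
      intro i hi
      simp only [Finset.mem_filter, Finset.mem_univ, true_and]
      rcases Finset.mem_insert.mp hi with rfl | hiS
      · exact le_refl _
      · exact (hsep i hiS j hjS).le
    have hcard' : k + 1 ≤ (Finset.univ.filter fun i => f x' j ≤ f x' i).card := by
      have := Finset.card_le_card hsub
      rwa [Finset.card_insert_of_notMem hjS, hcard] at this
    omega
  · intro hj
    have hjS : j ∈ S := by simpa [hS, Fk] using hj
    have hsub : (Finset.univ.filter fun i => f x' j ≤ f x' i) ⊆ S := by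
      intro i hi
      simp only [Finset.mem_filter, Finset.mem_univ, true_and] at hi
      by_contra hiS
      exact absurd hi (not_le.mpr (hsep j hjS i hiS))
    calc (Finset.univ.filter fun i => f x' j ≤ f x' i).card ≤ S.card :=
          Finset.card_le_card hsub
      _ = k := hcard
end
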